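/- Let ξ ∈ ℝ², ξ ≠ 0, and let b ∈ ℝ² be such that ξ·b = 0 and |b| = |ξ| (in ℝ² such b exists, e.g., b = (−ξ₂, ξ₁)). With u₁(y) = exp(πi(ξ·y)+π(b·y)) and u₂(y) = exp(πi(ξ·y)−π(b·y)), for any constant c > 0 and any continuous compactly supported δ̃ : ℝ² → ℝ, ∫_{ℝ²} c·δ̃(y) ∇u₁(y)·∇u₂(y) dy = −2π²|ξ|² c ∫_{ℝ²} δ̃(y) e^{2πi ξ·y} dy. Consequently, if ∫ c δ̃ ∇u₁·∇u₂ dy = 0 for all such ξ, then the Fourier transform of δ̃ vanishes at every nonzero frequency. -/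
import Mathlib


open Real MeasureTheory

lemma deriv_exp_lin' (k m : ℂ) (t : ℝ) :
    deriv (fun s : ℝ => Complex.exp (k * s + m)) t = Complex.exp (k * t + m) * k := by
  have h : HasDerivAt (fun s : ℝ => k * (s : ℂ) + m) k t := by
    simpa using ((Complex.ofRealCLM.hasDerivAt (x := t)).const_mul k).add_const m
  exact h.cexp.deriv

lemma calderon_main (δ : ℝ × ℝ → ℝ) (c : ℝ) (ξ b : ℝ × ℝ)
    (hnorm : ξ.1 ^ 2 + ξ.2 ^ 2 = b.1 ^ 2 + b.2 ^ 2) :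
    ∫ y : ℝ × ℝ, (c : ℂ) * (δ y : ℂ) *
          ((deriv (fun s : ℝ =>
              Complex.exp ((π : ℂ) * Complex.I * ((ξ.1 * s + ξ.2 * y.2 : ℝ) : ℂ)
                + (π : ℂ) * ((b.1 * s + b.2 * y.2 : ℝ) : ℂ))) y.1)
            * (deriv (fun s : ℝ =>
              Complex.exp ((π : ℂ) * Complex.I * ((ξ.1 * s + ξ.2 * y.2 : ℝ) : ℂ)
                - (π : ℂ) * ((b.1 * s + b.2 * y.2 : ℝ) : ℂ))) y.1)
          + (deriv (fun s : ℝ =>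
              Complex.exp ((π : ℂ) * Complex.I * ((ξ.1 * y.1 + ξ.2 * s : ℝ) : ℂ)
                + (π : ℂ) * ((b.1 * y.1 + b.2 * s : ℝ) : ℂ))) y.2)
            * (deriv (fun s : ℝ =>
              Complex.exp ((π : ℂ) * Complex.I * ((ξ.1 * y.1 + ξ.2 * s : ℝ) : ℂ)
                - (π : ℂ) * ((b.1 * y.1 + b.2 * s : ℝ) : ℂ))) y.2))
        = -2 * (π : ℂ) ^ 2 * ((ξ.1 ^ 2 + ξ.2 ^ 2 : ℝ) : ℂ) * (c : ℂ)
            * ∫ y : ℝ × ℝ, (δ y : ℂ)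
                * Complex.exp (2 * (π : ℂ) * Complex.I
                    * ((ξ.1 * y.1 + ξ.2 * y.2 : ℝ) : ℂ)) := by
  have hpt : ∀ y : ℝ × ℝ, (c : ℂ) * (δ y : ℂ) *
          ((deriv (fun s : ℝ =>
              Complex.exp ((π : ℂ) * Complex.I * ((ξ.1 * s + ξ.2 * y.2 : ℝ) : ℂ)
                + (π : ℂ) * ((b.1 * s + b.2 * y.2 : ℝ) : ℂ))) y.1)
            * (deriv (fun s : ℝ =>
              Complex.exp ((π : ℂ) * Complex.I * ((ξ.1 * s + ξ.2 * y.2 : ℝ) : ℂ)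
                - (π : ℂ) * ((b.1 * s + b.2 * y.2 : ℝ) : ℂ))) y.1)
          + (deriv (fun s : ℝ =>
              Complex.exp ((π : ℂ) * Complex.I * ((ξ.1 * y.1 + ξ.2 * s : ℝ) : ℂ)
                + (π : ℂ) * ((b.1 * y.1 + b.2 * s : ℝ) : ℂ))) y.2)
            * (deriv (fun s : ℝ =>
              Complex.exp ((π : ℂ) * Complex.I * ((ξ.1 * y.1 + ξ.2 * s : ℝ) : ℂ)
                - (π : ℂ) * ((b.1 * y.1 + b.2 * s : ℝ) : ℂ))) y.2))
      = (-2 * (π : ℂ) ^ 2 * ((ξ.1 ^ 2 + ξ.2 ^ 2 : ℝ) : ℂ) * (c : ℂ))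
          * ((δ y : ℂ) * Complex.exp (2 * (π : ℂ) * Complex.I
                    * ((ξ.1 * y.1 + ξ.2 * y.2 : ℝ) : ℂ))) := by
    intro y
    set k1 : ℂ := (π : ℂ) * Complex.I * ξ.1 + (π : ℂ) * b.1 with hk1
    set k1' : ℂ := (π : ℂ) * Complex.I * ξ.1 - (π : ℂ) * b.1 with hk1'
    set k2 : ℂ := (π : ℂ) * Complex.I * ξ.2 + (π : ℂ) * b.2 with hk2
    set k2' : ℂ := (π : ℂ) * Complex.I * ξ.2 - (π : ℂ) * b.2 with hk2'
    set m1 : ℂ := (π : ℂ) * Complex.I * ξ.2 * y.2 + (π : ℂ) * b.2 * y.2 with hm1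
    set m1' : ℂ := (π : ℂ) * Complex.I * ξ.2 * y.2 - (π : ℂ) * b.2 * y.2 with hm1'
    set m2 : ℂ := (π : ℂ) * Complex.I * ξ.1 * y.1 + (π : ℂ) * b.1 * y.1 with hm2
    set m2' : ℂ := (π : ℂ) * Complex.I * ξ.1 * y.1 - (π : ℂ) * b.1 * y.1 with hm2'
    have e1 : (fun s : ℝ =>
        Complex.exp ((π : ℂ) * Complex.I * ((ξ.1 * s + ξ.2 * y.2 : ℝ) : ℂ)
          + (π : ℂ) * ((b.1 * s + b.2 * y.2 : ℝ) : ℂ)))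
        = fun s : ℝ => Complex.exp (k1 * s + m1) := by
      funext s; congr 1; rw [hk1, hm1]; push_cast; ring
    have e2 : (fun s : ℝ =>
        Complex.exp ((π : ℂ) * Complex.I * ((ξ.1 * s + ξ.2 * y.2 : ℝ) : ℂ)
          - (π : ℂ) * ((b.1 * s + b.2 * y.2 : ℝ) : ℂ)))
        = fun s : ℝ => Complex.exp (k1' * s + m1') := by
      funext s; congr 1; rw [hk1', hm1']; push_cast; ring
    have e3 : (fun s : ℝ =>
        Complex.exp ((π : ℂ) * Complex.I * ((ξ.1 * y.1 + ξ.2 * s : ℝ) : ℂ)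
          + (π : ℂ) * ((b.1 * y.1 + b.2 * s : ℝ) : ℂ)))
        = fun s : ℝ => Complex.exp (k2 * s + m2) := by
      funext s; congr 1; rw [hk2, hm2]; push_cast; ring
    have e4 : (fun s : ℝ =>
        Complex.exp ((π : ℂ) * Complex.I * ((ξ.1 * y.1 + ξ.2 * s : ℝ) : ℂ)
          - (π : ℂ) * ((b.1 * y.1 + b.2 * s : ℝ) : ℂ)))
        = fun s : ℝ => Complex.exp (k2' * s + m2') := by
      funext s; congr 1; rw [hk2', hm2']; push_cast; ring
    rw [e1, e2, e3, e4, deriv_exp_lin', deriv_exp_lin', deriv_exp_lin', deriv_exp_lin']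
    have hE1 : Complex.exp (k1 * y.1 + m1) * Complex.exp (k1' * y.1 + m1')
        = Complex.exp (2 * (π : ℂ) * Complex.I * ((ξ.1 * y.1 + ξ.2 * y.2 : ℝ) : ℂ)) := by
      rw [← Complex.exp_add]; congr 1
      rw [hk1, hk1', hm1, hm1']; push_cast; ring
    have hE2 : Complex.exp (k2 * y.2 + m2) * Complex.exp (k2' * y.2 + m2')
        = Complex.exp (2 * (π : ℂ) * Complex.I * ((ξ.1 * y.1 + ξ.2 * y.2 : ℝ) : ℂ)) := by
      rw [← Complex.exp_add]; congr 1
      rw [hk2, hk2', hm2, hm2']; push_cast; ring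
    have hk : k1 * k1' + k2 * k2' = -2 * (π : ℂ) ^ 2 * ((ξ.1 ^ 2 + ξ.2 ^ 2 : ℝ) : ℂ) := by
      have hb : ((b.1 : ℂ) ^ 2 + (b.2 : ℂ) ^ 2) = ((ξ.1 : ℂ) ^ 2 + (ξ.2 : ℂ) ^ 2) := by
        exact_mod_cast hnorm.symm
      rw [hk1, hk1', hk2, hk2']; push_cast
      linear_combination ((π : ℂ) ^ 2 * ((ξ.1 : ℂ) ^ 2 + (ξ.2 : ℂ) ^ 2)) * Complex.I_sq
        - (π : ℂ) ^ 2 * hb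
    calc (c : ℂ) * (δ y : ℂ) *
          (Complex.exp (k1 * y.1 + m1) * k1 * (Complex.exp (k1' * y.1 + m1') * k1')
          + Complex.exp (k2 * y.2 + m2) * k2 * (Complex.exp (k2' * y.2 + m2') * k2'))
        = (c : ℂ) * (δ y : ℂ) *
          ((k1 * k1') * (Complex.exp (k1 * y.1 + m1) * Complex.exp (k1' * y.1 + m1'))
          + (k2 * k2') * (Complex.exp (k2 * y.2 + m2) * Complex.exp (k2' * y.2 + m2'))) := by
          ring
      _ = (c : ℂ) * (δ y : ℂ) * ((k1 * k1' + k2 * k2')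
            * Complex.exp (2 * (π : ℂ) * Complex.I * ((ξ.1 * y.1 + ξ.2 * y.2 : ℝ) : ℂ))) := by
          rw [hE1, hE2]; ring
      _ = (-2 * (π : ℂ) ^ 2 * ((ξ.1 ^ 2 + ξ.2 ^ 2 : ℝ) : ℂ) * (c : ℂ))
            * ((δ y : ℂ) * Complex.exp (2 * (π : ℂ) * Complex.I
                * ((ξ.1 * y.1 + ξ.2 * y.2 : ℝ) : ℂ))) := by
          rw [hk]; ring
  simp only [hpt]
  rw [MeasureTheory.integral_const_mul]

/-- for `ξ ≠ 0` and `b` with `ξ·b = 0`, `|b| = |ξ|`, and the Calderón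
exponentials `u₁ = exp(πi ξ·y + π b·y)`, `u₂ = exp(πi ξ·y − π b·y)`,
`∫ c δ̃ ∇u₁·∇u₂ dy = −2π²|ξ|² c ∫ δ̃ e^{2πi ξ·y} dy`; consequently, if the left side
vanishes for all such `ξ` (and admissible `b`), the Fourier transform of `δ̃`
vanishes at every nonzero frequency. -/
theorem calderon_integral_identity (δ : ℝ × ℝ → ℝ) (hδc : Continuous δ)
    (hδs : HasCompactSupport δ) (c : ℝ) (hc : 0 < c) :
    (∀ ξ b : ℝ × ℝ, ξ ≠ 0 → ξ.1 * b.1 + ξ.2 * b.2 = 0 →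
      ξ.1 ^ 2 + ξ.2 ^ 2 = b.1 ^ 2 + b.2 ^ 2 →
      ∫ y : ℝ × ℝ, (c : ℂ) * (δ y : ℂ) *
          ((deriv (fun s : ℝ =>
              Complex.exp ((π : ℂ) * Complex.I * ((ξ.1 * s + ξ.2 * y.2 : ℝ) : ℂ)
                + (π : ℂ) * ((b.1 * s + b.2 * y.2 : ℝ) : ℂ))) y.1)
            * (deriv (fun s : ℝ =>
              Complex.exp ((π : ℂ) * Complex.I * ((ξ.1 * s + ξ.2 * y.2 : ℝ) : ℂ)
                - (π : ℂ) * ((b.1 * s + b.2 * y.2 : ℝ) : ℂ))) y.1)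
          + (deriv (fun s : ℝ =>
              Complex.exp ((π : ℂ) * Complex.I * ((ξ.1 * y.1 + ξ.2 * s : ℝ) : ℂ)
                + (π : ℂ) * ((b.1 * y.1 + b.2 * s : ℝ) : ℂ))) y.2)
            * (deriv (fun s : ℝ =>
              Complex.exp ((π : ℂ) * Complex.I * ((ξ.1 * y.1 + ξ.2 * s : ℝ) : ℂ)
                - (π : ℂ) * ((b.1 * y.1 + b.2 * s : ℝ) : ℂ))) y.2))
        = -2 * (π : ℂ) ^ 2 * ((ξ.1 ^ 2 + ξ.2 ^ 2 : ℝ) : ℂ) * (c : ℂ)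
            * ∫ y : ℝ × ℝ, (δ y : ℂ)
                * Complex.exp (2 * (π : ℂ) * Complex.I
                    * ((ξ.1 * y.1 + ξ.2 * y.2 : ℝ) : ℂ)))
    ∧
    ((∀ ξ b : ℝ × ℝ, ξ ≠ 0 → ξ.1 * b.1 + ξ.2 * b.2 = 0 →
      ξ.1 ^ 2 + ξ.2 ^ 2 = b.1 ^ 2 + b.2 ^ 2 →
      ∫ y : ℝ × ℝ, (c : ℂ) * (δ y : ℂ) *
          ((deriv (fun s : ℝ =>
              Complex.exp ((π : ℂ) * Complex.I * ((ξ.1 * s + ξ.2 * y.2 : ℝ) : ℂ)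
                + (π : ℂ) * ((b.1 * s + b.2 * y.2 : ℝ) : ℂ))) y.1)
            * (deriv (fun s : ℝ =>
              Complex.exp ((π : ℂ) * Complex.I * ((ξ.1 * s + ξ.2 * y.2 : ℝ) : ℂ)
                - (π : ℂ) * ((b.1 * s + b.2 * y.2 : ℝ) : ℂ))) y.1)
          + (deriv (fun s : ℝ =>
              Complex.exp ((π : ℂ) * Complex.I * ((ξ.1 * y.1 + ξ.2 * s : ℝ) : ℂ)
                + (π : ℂ) * ((b.1 * y.1 + b.2 * s : ℝ) : ℂ))) y.2)
            * (deriv (fun s : ℝ =>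
              Complex.exp ((π : ℂ) * Complex.I * ((ξ.1 * y.1 + ξ.2 * s : ℝ) : ℂ)
                - (π : ℂ) * ((b.1 * y.1 + b.2 * s : ℝ) : ℂ))) y.2))
        = 0) →
      ∀ ξ : ℝ × ℝ, ξ ≠ 0 →
        ∫ y : ℝ × ℝ, (δ y : ℂ)
            * Complex.exp (2 * (π : ℂ) * Complex.I
                * ((ξ.1 * y.1 + ξ.2 * y.2 : ℝ) : ℂ)) = 0) := by
  constructor
  · intro ξ b _ _ h3
    exact calderon_main δ c ξ b h3
  · intro H ξ hξ
    have h3 : ξ.1 ^ 2 + ξ.2 ^ 2 = (-ξ.2) ^ 2 + ξ.1 ^ 2 := by ring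
    have hz := H ξ (-ξ.2, ξ.1) hξ (by ring) h3
    rw [calderon_main δ c ξ (-ξ.2, ξ.1) h3] at hz
    have hpos : 0 < ξ.1 ^ 2 + ξ.2 ^ 2 := by
      have h : ξ.1 ≠ 0 ∨ ξ.2 ≠ 0 := by
        by_contra h; push_neg at h
        exact hξ (Prod.ext h.1 h.2)
      rcases h with h | h <;> positivity
    have hne : (-2 * (π : ℂ) ^ 2 * ((ξ.1 ^ 2 + ξ.2 ^ 2 : ℝ) : ℂ) * (c : ℂ)) ≠ 0 := by
      apply mul_ne_zero (mul_ne_zero (mul_ne_zero (by norm_num)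
        (pow_ne_zero _ (Complex.ofReal_ne_zero.mpr Real.pi_ne_zero)))
        (Complex.ofReal_ne_zero.mpr hpos.ne'))
        (Complex.ofReal_ne_zero.mpr hc.ne')
    exact (mul_eq_zero.mp hz).resolve_left hne
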